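/- arXiv:2605.20933 — 3 statements merged into one kernel-verified Lean document; each statement's English description precedes it below -/
import Mathlib

section
/- Let n, m ≥ 1, let u, v ∈ ℝⁿ be nonzero vectors with uᵀv ≠ 0, let λ ∈ ℝ with λ ≠ 0, let f₁,…,f_m ∈ ℝ and weights w₁,…,w_m ≥ 0. Consider the set S_sym = { |Σᵢ₌₁ᵐ fᵢ · (uᵀEᵢv)| / (|λ| · |uᵀv|) : E₁,…,E_m ∈ ℝ^{n×n} symmetric (Eᵢᵀ = Eᵢ) with ‖Eᵢ‖₂ ≤ wᵢ for all i }. Then the greatest element of S_sym equals κ = (Σᵢ₌₁ᵐ |fᵢ| wᵢ) · ‖u‖ · ‖v‖ / (|λ| · |uᵀv|); i.e., restricting to symmetric perturbations measured in the spectral norm does not change the eigenvalue condition number, and the maximum is attained (e.g. by Eᵢ = sign(fᵢ) wᵢ H with H the Householder reflector defined by u/‖u‖ − v/‖v‖). -/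
/-!
Each summand satisfies `|fᵢ uᵀEᵢv| ≤ |fᵢ| ‖u‖ ‖Eᵢ‖₂ ‖v‖ ≤ |fᵢ| wᵢ ‖u‖ ‖v‖` by Cauchy–Schwarz, which
gives the upper bound. For attainment, let `H` be the Householder reflection sending `‖u‖ v` to
`‖v‖ u` (two vectors of equal length): it is symmetric and orthogonal, so `‖H‖₂ ≤ 1` and
`uᵀHv = ‖u‖ ‖v‖`, and `Eᵢ = sign(fᵢ) wᵢ H` makes every summand equal to `|fᵢ| wᵢ ‖u‖ ‖v‖`.
-/

open Matrix

noncomputable def e2norm {n : ℕ} (v : Fin n → ℝ) : ℝ := Real.sqrt (∑ i, v i ^ 2)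

noncomputable def frobNorm {n m : ℕ} (M : Matrix (Fin n) (Fin m) ℝ) : ℝ :=
  Real.sqrt (∑ i, ∑ j, M i j ^ 2)

noncomputable def specNorm {n m : ℕ} (M : Matrix (Fin n) (Fin m) ℝ) : ℝ :=
  sSup ((fun x => e2norm (M.mulVec x)) '' {x : Fin m → ℝ | e2norm x = 1})

open WithLp
open scoped RealInnerProductSpace

theorem SignType.abs_coe_le_one {α : Type*} [Ring α] [LinearOrder α] [IsStrictOrderedRing α]
    (s : SignType) : |(s : α)| ≤ 1 := by
  cases s <;> simp

theorem Submodule.isSymmetric_reflection {𝕜 E : Type*} [RCLike 𝕜] [NormedAddCommGroup E]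
    [InnerProductSpace 𝕜 E] (K : Submodule 𝕜 E) [K.HasOrthogonalProjection] :
    (K.reflection : E →ₗ[𝕜] E).IsSymmetric := fun x y => by
  have h := K.reflection.inner_map_map x (K.reflection y)
  rw [K.reflection_reflection] at h
  exact h

theorem exists_linearIsometryEquiv_isSymmetric_inner_apply_eq_norm_mul_norm {F : Type*}
    [NormedAddCommGroup F] [InnerProductSpace ℝ F] (x y : F) :
    ∃ R : F ≃ₗᵢ[ℝ] F, (R : F →ₗ[ℝ] F).IsSymmetric ∧ ⟪x, R y⟫ = ‖x‖ * ‖y‖ := by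
  let K := (ℝ ∙ (‖x‖ • y - ‖y‖ • x))ᗮ
  refine ⟨K.reflection, K.isSymmetric_reflection, ?_⟩
  have h_reflect : K.reflection (‖x‖ • y) = ‖y‖ • x :=
    Submodule.reflection_sub (by simp only [norm_smul, norm_norm, mul_comm])
  rcases eq_or_ne x 0 with rfl | hx
  · simp
  apply mul_left_cancel₀ (norm_ne_zero_iff.mpr hx)
  rw [← inner_smul_right, ← map_smul, h_reflect, inner_smul_right, real_inner_self_eq_norm_sq]
  ring

section

variable {n : ℕ}

theorem e2norm_nonneg (x : Fin n → ℝ) : 0 ≤ e2norm x := Real.sqrt_nonneg _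

theorem e2norm_eq_norm (x : Fin n → ℝ) : e2norm x = ‖toLp 2 x‖ := by
  simp [e2norm, EuclideanSpace.norm_eq]

theorem dotProduct_eq_inner (x y : Fin n → ℝ) : x ⬝ᵥ y = ⟪toLp 2 x, toLp 2 y⟫ := by
  simp [EuclideanSpace.inner_toLp_toLp, dotProduct_comm]

theorem specNorm_eq_norm_toEuclideanCLM (M : Matrix (Fin n) (Fin n) ℝ) :
    specNorm M = ‖toEuclideanCLM (𝕜 := ℝ) M‖ := by
  rw [specNorm, ← ContinuousLinearMap.sSup_sphere_eq_norm]
  congr 1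
  ext r
  simp only [Set.mem_image, Set.mem_ofPred_eq, mem_sphere_zero_iff_norm, e2norm_eq_norm]
  constructor
  · rintro ⟨x, hx, rfl⟩
    exact ⟨toLp 2 x, hx, rfl⟩
  · rintro ⟨y, hy, rfl⟩
    exact ⟨ofLp y, hy, rfl⟩

theorem specNorm_smul_le {c r : ℝ} {M : Matrix (Fin n) (Fin n) ℝ} (hc : |c| ≤ r)
    (hM : specNorm M ≤ 1) : specNorm (c • M) ≤ r := by
  rw [specNorm_eq_norm_toEuclideanCLM] at hM ⊢
  rw [map_smul, norm_smul, Real.norm_eq_abs]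
  exact mul_le_of_le_one_right (abs_nonneg c) hM |>.trans hc

theorem abs_dotProduct_mulVec_le (u v : Fin n → ℝ) (M : Matrix (Fin n) (Fin n) ℝ) :
    |u ⬝ᵥ M *ᵥ v| ≤ e2norm u * specNorm M * e2norm v := by
  rw [dotProduct_eq_inner, e2norm_eq_norm, e2norm_eq_norm, specNorm_eq_norm_toEuclideanCLM,
    mul_assoc, ← toEuclideanCLM_toLp]
  exact (abs_real_inner_le_norm _ _).trans
    (mul_le_mul_of_nonneg_left (ContinuousLinearMap.le_opNorm _ _) (norm_nonneg _))

theorem exists_transpose_eq_self_specNorm_le_one_dotProduct_mulVec_eq (u v : Fin n → ℝ) :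
    ∃ H : Matrix (Fin n) (Fin n) ℝ, Hᵀ = H ∧ specNorm H ≤ 1 ∧
      u ⬝ᵥ H *ᵥ v = e2norm u * e2norm v := by
  obtain ⟨R, hR_symm, hR_uv⟩ :=
    exists_linearIsometryEquiv_isSymmetric_inner_apply_eq_norm_mul_norm (toLp 2 u) (toLp 2 v)
  let H := (toEuclideanCLM (𝕜 := ℝ) (n := Fin n)).symm (R : _ →L[ℝ] _)
  have hH : toEuclideanCLM (𝕜 := ℝ) H = R := StarAlgEquiv.apply_symm_apply _ _
  refine ⟨H, ?_, ?_, ?_⟩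
  · have hR : IsSelfAdjoint (R : EuclideanSpace ℝ (Fin n) →L[ℝ] _) :=
      ContinuousLinearMap.isSelfAdjoint_iff_isSymmetric.mpr hR_symm
    apply EquivLike.injective (toEuclideanCLM (𝕜 := ℝ) (n := Fin n))
    rw [← conjTranspose_eq_transpose_of_trivial, ← star_eq_conjTranspose, map_star, hH]
    exact hR
  · rw [specNorm_eq_norm_toEuclideanCLM, hH]
    exact R.toContinuousLinearMap.opNorm_le_bound zero_le_one fun x => by simp
  · rw [dotProduct_eq_inner, e2norm_eq_norm, e2norm_eq_norm, ← toEuclideanCLM_toLp, hH]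
    exact hR_uv

variable {ι : Type*} [Fintype ι]

theorem abs_sum_mul_dotProduct_mulVec_le (u v : Fin n → ℝ) (f w : ι → ℝ)
    (E : ι → Matrix (Fin n) (Fin n) ℝ) (hE : ∀ i, specNorm (E i) ≤ w i) :
    |∑ i, f i * (u ⬝ᵥ E i *ᵥ v)| ≤ (∑ i, |f i| * w i) * e2norm u * e2norm v :=
  calc |∑ i, f i * (u ⬝ᵥ E i *ᵥ v)|
      ≤ ∑ i, |f i| * (e2norm u * specNorm (E i) * e2norm v) := by
        refine (Finset.abs_sum_le_sum_abs _ _).trans (Finset.sum_le_sum fun i _ => ?_)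
        rw [abs_mul]
        exact mul_le_mul_of_nonneg_left (abs_dotProduct_mulVec_le u v (E i)) (abs_nonneg _)
    _ ≤ ∑ i, |f i| * (e2norm u * w i * e2norm v) := by
        have := e2norm_nonneg u
        have := e2norm_nonneg v
        gcongr with i
        exact hE i
    _ = (∑ i, |f i| * w i) * e2norm u * e2norm v := by
        simp only [Finset.sum_mul]
        exact Finset.sum_congr rfl fun i _ => by ring

theorem sum_mul_dotProduct_sign_mul_smul_mulVec {u v : Fin n → ℝ} {H : Matrix (Fin n) (Fin n) ℝ}
    {c : ℝ} (f w : ι → ℝ) (hH : u ⬝ᵥ H *ᵥ v = c) :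
    ∑ i, f i * (u ⬝ᵥ ((SignType.sign (f i) * w i) • H) *ᵥ v) = (∑ i, |f i| * w i) * c := by
  rw [Finset.sum_mul]
  refine Finset.sum_congr rfl fun i _ => ?_
  rw [smul_mulVec, dotProduct_smul, smul_eq_mul, hH, ← self_mul_sign (f i)]
  ring

end

theorem symmetric_eigenvalue_condition_number_spectral_general
    {n m : ℕ}
    (u v : Fin n → ℝ)
    (lam : ℝ)
    (f w : Fin m → ℝ) (hw : ∀ i, 0 ≤ w i) :
    IsGreatest
      {s : ℝ | ∃ E : Fin m → Matrix (Fin n) (Fin n) ℝ,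
        (∀ i, (E i)ᵀ = E i) ∧
        (∀ i, specNorm (E i) ≤ w i) ∧
        s = |∑ i, f i * (u ⬝ᵥ (E i).mulVec v)| / (|lam| * |u ⬝ᵥ v|)}
      ((∑ i, |f i| * w i) * e2norm u * e2norm v / (|lam| * |u ⬝ᵥ v|)) := by
  obtain ⟨H, hH_symm, hH_norm, hH_uv⟩ :=
    exists_transpose_eq_self_specNorm_le_one_dotProduct_mulVec_eq u v
  have hE_norm (i : Fin m) : specNorm ((SignType.sign (f i) * w i) • H) ≤ w i := by
    refine specNorm_smul_le ?_ hH_norm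
    rw [abs_mul, abs_of_nonneg (hw i)]
    exact mul_le_of_le_one_left (hw i) (SignType.abs_coe_le_one _)
  have h_nonneg : 0 ≤ (∑ i, |f i| * w i) * (e2norm u * e2norm v) :=
    mul_nonneg (Finset.sum_nonneg fun i _ => mul_nonneg (abs_nonneg _) (hw i))
      (mul_nonneg (e2norm_nonneg u) (e2norm_nonneg v))
  refine ⟨⟨_, fun i => by rw [transpose_smul, hH_symm], hE_norm, ?_⟩, ?_⟩
  · rw [sum_mul_dotProduct_sign_mul_smul_mulVec f w hH_uv, abs_of_nonneg h_nonneg, mul_assoc]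
  · rintro _ ⟨E, -, hE, rfl⟩
    gcongr
    exact abs_sum_mul_dotProduct_mulVec_le u v f w E hE

/-- restricting to symmetric perturbations measured in the
spectral norm does not change the eigenvalue condition number. -/
theorem symmetric_eigenvalue_condition_number_spectral
    {n m : ℕ} (hn : 1 ≤ n) (hm : 1 ≤ m)
    (u v : Fin n → ℝ) (hu : u ≠ 0) (hv : v ≠ 0) (huv : u ⬝ᵥ v ≠ 0)
    (lam : ℝ) (hlam : lam ≠ 0)
    (f w : Fin m → ℝ) (hw : ∀ i, 0 ≤ w i) :
    IsGreatest
      {s : ℝ | ∃ E : Fin m → Matrix (Fin n) (Fin n) ℝ,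
        (∀ i, (E i)ᵀ = E i) ∧
        (∀ i, specNorm (E i) ≤ w i) ∧
        s = |∑ i, f i * (u ⬝ᵥ (E i).mulVec v)| / (|lam| * |u ⬝ᵥ v|)}
      ((∑ i, |f i| * w i) * e2norm u * e2norm v / (|lam| * |u ⬝ᵥ v|)) :=
  symmetric_eigenvalue_condition_number_spectral_general u v lam f w hw
end

section
/- Let n, m ≥ 1, let M ∈ ℝ^{n×n}, let ṽ ∈ ℝⁿ be nonzero, λ̃ ∈ ℝ, let f₁,…,f_m ∈ ℝ and weights w₁,…,w_m ≥ 0 with Σᵢ₌₁ᵐ |fᵢ| wᵢ > 0, and set r = Mṽ − λ̃ṽ. Consider the set T_sym = { |ε| : ε ∈ ℝ and there exist symmetric E₁,…,E_m ∈ ℝ^{n×n} (Eᵢᵀ = Eᵢ) with ‖Eᵢ‖₂ ≤ wᵢ for all i such that (M + ε Σᵢ₌₁ᵐ fᵢ Eᵢ) ṽ = λ̃ ṽ }. Then the least element of T_sym is again ‖r‖ / ((Σᵢ₌₁ᵐ |fᵢ| wᵢ) ‖ṽ‖); i.e., restricting to symmetric perturbations measured in the spectral norm does not change the backward error, and the minimum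 is attained (e.g. by Eᵢ = −sign(fᵢ) wᵢ H with H the Householder reflector defined by r/‖r‖ − ṽ/‖ṽ‖, which satisfies Hṽ = (‖ṽ‖/‖r‖) r). -/
open Matrix

/-!
If `(M + ε ∑ fᵢ Eᵢ) ṽ = λ̃ ṽ` then `r = -ε (∑ fᵢ Eᵢ) ṽ`, so the triangle inequality for the spectral
norm gives `‖r‖ ≤ |ε| (∑ |fᵢ| wᵢ) ‖ṽ‖`. Conversely, write `r = ‖r‖ u` with `‖u‖ = 1` and let `H` be
the Householder reflection sending `ṽ` to `‖ṽ‖ u`. It is symmetric (an isometric involution is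
self-adjoint) and has spectral norm at most `1`, and `Eᵢ = -sign(fᵢ) wᵢ H` gives
`∑ fᵢ Eᵢ = -(∑ |fᵢ| wᵢ) H`, which attains the bound.
-/

open scoped Matrix.Norms.L2Operator
open WithLp (toLp ofLp)

lemma e2norm_eq_norm_toLp {n : ℕ} (v : Fin n → ℝ) : e2norm v = ‖toLp 2 v‖ := by
  simp [e2norm, EuclideanSpace.norm_eq, sq_abs]

lemma specNorm_eq_l2_opNorm {n m : ℕ} (A : Matrix (Fin n) (Fin m) ℝ) : specNorm A = ‖A‖ := by
  rw [Matrix.l2_opNorm_def, ← ContinuousLinearMap.sSup_sphere_eq_norm, specNorm]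
  congr 1
  ext t
  simp only [e2norm_eq_norm_toLp, Set.mem_image, Set.mem_ofPred_eq, mem_sphere_iff_norm, sub_zero]
  constructor
  · rintro ⟨x, hx, rfl⟩
    exact ⟨toLp 2 x, hx, rfl⟩
  · rintro ⟨x, hx, rfl⟩
    exact ⟨ofLp x, hx, rfl⟩

theorem LinearIsometryEquiv.isSymmetric_of_involutive {𝕜 E : Type*} [RCLike 𝕜]
    [NormedAddCommGroup E] [InnerProductSpace 𝕜 E] (R : E ≃ₗᵢ[𝕜] E)
    (hR : Function.Involutive R) : (R : E →ₗ[𝕜] E).IsSymmetric := fun x y => by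
  simp only [LinearEquiv.coe_coe]
  conv_lhs => rw [← hR y]
  exact R.inner_map_map x (R y)

theorem exists_isSymm_l2_opNorm_le_one_mulVec_eq {ι : Type*} [Fintype ι] [DecidableEq ι]
    {a b : EuclideanSpace ℝ ι} (h : ‖b‖ = ‖a‖) :
    ∃ H : Matrix ι ι ℝ, H.IsSymm ∧ ‖H‖ ≤ 1 ∧ H *ᵥ ofLp b = ofLp a := by
  set R := (ℝ ∙ (b - a))ᗮ.reflection
  refine ⟨(Matrix.toEuclideanCLM (𝕜 := ℝ) (n := ι)).symm R, ?_, ?_, ?_⟩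
  · rw [← Matrix.isHermitian_iff_isSymm, ← Matrix.isSymmetric_toEuclideanLin_iff,
      ← Matrix.coe_toEuclideanCLM_eq_toEuclideanLin, StarAlgEquiv.apply_symm_apply]
    exact R.isSymmetric_of_involutive (Submodule.reflection_involutive _)
  · rw [← Matrix.l2_opNorm_toEuclideanCLM, StarAlgEquiv.apply_symm_apply]
    exact R.toLinearIsometry.norm_toContinuousLinearMap_le
  · rw [← Matrix.ofLp_toEuclideanCLM, StarAlgEquiv.apply_symm_apply]
    exact congrArg ofLp (Submodule.reflection_sub h)

theorem exists_norm_eq_one_smul_eq {E : Type*} [NormedAddCommGroup E] [NormedSpace ℝ E]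
    [Nontrivial E] (x : E) : ∃ u : E, ‖u‖ = 1 ∧ ‖x‖ • u = x := by
  rcases eq_or_ne x 0 with rfl | hx
  · obtain ⟨u, hu⟩ := exists_norm_eq E zero_le_one
    exact ⟨u, hu, by simp⟩
  · exact ⟨‖x‖⁻¹ • x, norm_smul_inv_norm hx, smul_inv_smul₀ (norm_ne_zero_iff.2 hx) x⟩

section BackwardError

variable {ι κ : Type*} [Fintype ι] [DecidableEq ι] [Fintype κ]
  (M : Matrix ι ι ℝ) (v : ι → ℝ) (lam : ℝ) (f w : κ → ℝ)

theorem norm_residual_le_of_perturbation_mulVec_eq {ε : ℝ} {E : κ → Matrix ι ι ℝ}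
    (hE : ∀ i, ‖E i‖ ≤ w i)
    (heq : (M + ε • ∑ i, f i • E i) *ᵥ v = lam • v) :
    ‖toLp 2 (M *ᵥ v - lam • v)‖ ≤ |ε| * ((∑ i, |f i| * w i) * ‖toLp 2 v‖) := by
  set F := ∑ i, f i • E i
  have hres : M *ᵥ v - lam • v = -(ε • F *ᵥ v) := by
    rw [← heq, add_mulVec, smul_mulVec]
    abel
  have hF : ‖F‖ ≤ ∑ i, |f i| * w i := calc
    ‖F‖ ≤ ∑ i, ‖f i • E i‖ := norm_sum_le _ _
    _ ≤ ∑ i, |f i| * w i := Finset.sum_le_sum fun i _ => by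
      rw [norm_smul, Real.norm_eq_abs]
      exact mul_le_mul_of_nonneg_left (hE i) (abs_nonneg _)
  calc ‖toLp 2 (M *ᵥ v - lam • v)‖ = |ε| * ‖toLp 2 (F *ᵥ v)‖ := by
        rw [hres, WithLp.toLp_neg, norm_neg, WithLp.toLp_smul, norm_smul, Real.norm_eq_abs]
    _ ≤ |ε| * (‖F‖ * ‖toLp 2 v‖) := by
        gcongr
        exact Matrix.l2_opNorm_mulVec F (toLp 2 v)
    _ ≤ |ε| * ((∑ i, |f i| * w i) * ‖toLp 2 v‖) := by gcongr

theorem exists_isSymm_perturbation_mulVec_eq (hv : v ≠ 0) (hw : ∀ i, 0 ≤ w i)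
    (hpos : 0 < ∑ i, |f i| * w i) :
    ∃ E : κ → Matrix ι ι ℝ, (∀ i, (E i).IsSymm) ∧ (∀ i, ‖E i‖ ≤ w i) ∧
      (M + (‖toLp 2 (M *ᵥ v - lam • v)‖ / ((∑ i, |f i| * w i) * ‖toLp 2 v‖)) •
        ∑ i, f i • E i) *ᵥ v = lam • v := by
  set r := M *ᵥ v - lam • v
  set S := ∑ i, |f i| * w i
  have hv' : toLp 2 v ≠ 0 := by simpa using hv
  have : Nontrivial (EuclideanSpace ℝ ι) := ⟨⟨_, 0, hv'⟩⟩
  obtain ⟨u, hu, hru⟩ := exists_norm_eq_one_smul_eq (toLp 2 r)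
  obtain ⟨H, hHsymm, hHnorm, hHv⟩ := exists_isSymm_l2_opNorm_le_one_mulVec_eq
    (a := ‖toLp 2 v‖ • u) (b := toLp 2 v) (by rw [norm_smul, hu, norm_norm, mul_one])
  refine ⟨fun i => (-(SignType.sign (f i) * w i)) • H, fun i => hHsymm.smul _, fun i => ?_, ?_⟩
  · have hsign : |(SignType.sign (f i) : ℝ)| ≤ 1 := by
      cases SignType.sign (f i) <;> norm_num
    calc ‖(-(SignType.sign (f i) * w i)) • H‖ = |(SignType.sign (f i) : ℝ)| * w i * ‖H‖ := by
          rw [norm_smul, norm_neg, norm_mul, Real.norm_eq_abs, Real.norm_eq_abs,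
            abs_of_nonneg (hw i)]
      _ ≤ 1 * w i * 1 := by have := hw i; gcongr
      _ = w i := by ring
  · have hsum : ∑ i, f i • (-(SignType.sign (f i) * w i)) • H = (-S) • H := by
      simp only [smul_smul, ← Finset.sum_smul, S, ← Finset.sum_neg_distrib]
      congr 1
      refine Finset.sum_congr rfl fun i _ => ?_
      rw [← self_mul_sign]
      ring
    have hcoef : ‖toLp 2 r‖ / (S * ‖toLp 2 v‖) * -S * ‖toLp 2 v‖ = -‖toLp 2 r‖ := by
      field_simp [hpos.ne', norm_ne_zero_iff.2 hv']
    rw [hsum, add_mulVec, smul_mulVec, smul_mulVec, hHv, smul_smul, WithLp.ofLp_smul, smul_smul,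
      hcoef, neg_smul, ← WithLp.ofLp_smul, hru, neg_sub, add_sub_cancel]

end BackwardError

theorem symmetric_backward_error_spectral_general
    {n m : ℕ}
    (M : Matrix (Fin n) (Fin n) ℝ)
    (v : Fin n → ℝ) (hv : v ≠ 0) (lam : ℝ)
    (f w : Fin m → ℝ) (hw : ∀ i, 0 ≤ w i)
    (hpos : 0 < ∑ i, |f i| * w i)
    (r : Fin n → ℝ) (hr : r = M.mulVec v - lam • v) :
    IsLeast
      {t : ℝ | ∃ ε : ℝ, ∃ E : Fin m → Matrix (Fin n) (Fin n) ℝ,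
        (∀ i, (E i)ᵀ = E i) ∧
        (∀ i, specNorm (E i) ≤ w i) ∧
        (M + ε • ∑ i, f i • E i).mulVec v = lam • v ∧ t = |ε|}
      (e2norm r / ((∑ i, |f i| * w i) * e2norm v)) := by
  subst hr
  simp only [specNorm_eq_l2_opNorm, e2norm_eq_norm_toLp]
  refine ⟨?_, ?_⟩
  · obtain ⟨E, hsymm, hnorm, heq⟩ := exists_isSymm_perturbation_mulVec_eq M v lam f w hv hw hpos
    exact ⟨_, E, hsymm, hnorm, heq, (abs_of_nonneg (by positivity)).symm⟩
  · rintro _ ⟨ε, E, -, hnorm, heq, rfl⟩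
    rw [div_le_iff₀ (mul_pos hpos (norm_pos_iff.2 (by simpa using hv)))]
    exact norm_residual_le_of_perturbation_mulVec_eq M v lam f w hnorm heq

/-- restricting to symmetric perturbations measured in the
spectral norm does not change the backward error. -/
theorem symmetric_backward_error_spectral
    {n m : ℕ} (hn : 1 ≤ n) (hm : 1 ≤ m)
    (M : Matrix (Fin n) (Fin n) ℝ)
    (v : Fin n → ℝ) (hv : v ≠ 0) (lam : ℝ)
    (f w : Fin m → ℝ) (hw : ∀ i, 0 ≤ w i)
    (hpos : 0 < ∑ i, |f i| * w i)
    (r : Fin n → ℝ) (hr : r = M.mulVec v - lam • v) :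
    IsLeast
      {t : ℝ | ∃ ε : ℝ, ∃ E : Fin m → Matrix (Fin n) (Fin n) ℝ,
        (∀ i, (E i)ᵀ = E i) ∧
        (∀ i, specNorm (E i) ≤ w i) ∧
        (M + ε • ∑ i, f i • E i).mulVec v = lam • v ∧ t = |ε|}
      (e2norm r / ((∑ i, |f i| * w i) * e2norm v)) :=
  symmetric_backward_error_spectral_general M v hv lam f w hw hpos r hr
end

section
/- Let n, m ≥ 1, let M ∈ ℝ^{n×n}, let ṽ ∈ ℝⁿ be nonzero, λ̃ ∈ ℝ, let f₁,…,f_m ∈ ℝ and weights w₁,…,w_m ≥ 0 with Σᵢ₌₁ᵐ |fᵢ| wᵢ > 0, set r = Mṽ − λ̃ṽ and assume r ≠ 0, and define γ = sqrt(2 − (rᵀṽ)²/(‖r‖²‖ṽ‖²)) (so γ = sqrt(1 + sin²ϑ) with ϑ the angle between r and ṽ). Consider the set T_sym^F = { |ε| : ε ∈ ℝ and there exist symmetric E₁,…,E_m ∈ ℝ^{n×n} (Eᵢᵀ = Eᵢ) with ‖Eᵢ‖_F ≤ wᵢ for all i such that (M + ε Σᵢ₌₁ᵐ fᵢ Eᵢ)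 ṽ = λ̃ ṽ }. Then the least element of T_sym^F equals γ · ‖r‖ / ((Σᵢ₌₁ᵐ |fᵢ| wᵢ) ‖ṽ‖): it is a lower bound for T_sym^F and it is attained, e.g. by Eᵢ = (sign(fᵢ) wᵢ / (γ‖r‖‖ṽ‖)) · ((rᵀṽ/‖ṽ‖²) ṽṽᵀ − ṽrᵀ − rṽᵀ). -/
/-!
Put `Δ = ε Σᵢ fᵢ Eᵢ`. The constraints say exactly that `Δ` is symmetric with `Δ v = -r`, and
`‖Δ‖_F ≤ |ε| Σᵢ |fᵢ| wᵢ`. For a symmetric `Δ` with `Δ v = a`, the Frobenius pairing of `Δ` with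
`G = (aᵀv) v vᵀ - ‖v‖² (v aᵀ + a vᵀ)` depends only on `v` and `a`: it equals
`-(2 ‖v‖² ‖a‖² - (aᵀv)²) = -‖G‖_F² / ‖v‖⁴`. Cauchy–Schwarz therefore gives
`‖Δ‖_F ‖v‖² ≥ √(2 ‖v‖² ‖r‖² - (rᵀv)²) = γ ‖r‖ ‖v‖`, which is the lower bound. Equality holds for
`Δ` a multiple of `G`, and `Eᵢ = sign(fᵢ) wᵢ G / ‖G‖_F` also makes the triangle inequality
`‖Σᵢ fᵢ Eᵢ‖_F ≤ Σᵢ |fᵢ| wᵢ` an equality.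
-/

open Matrix

section DotProduct

variable {ι : Type*} [Fintype ι]

theorem sq_dotProduct_le (u v : ι → ℝ) : (u ⬝ᵥ v) ^ 2 ≤ (u ⬝ᵥ u) * (v ⬝ᵥ v) := by
  simpa only [dotProduct, sq] using Finset.sum_mul_sq_le_sq_mul_sq Finset.univ u v

theorem dotProduct_self_nonneg (v : ι → ℝ) : 0 ≤ v ⬝ᵥ v :=
  Fintype.sum_nonneg fun i => mul_self_nonneg (v i)

theorem dotProduct_self_pos {v : ι → ℝ} (hv : v ≠ 0) : 0 < v ⬝ᵥ v :=
  (dotProduct_self_nonneg v).lt_of_ne' (dotProduct_self_eq_zero.not.mpr hv)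

theorem dotProduct_self_mul_le_two_mul_sub_sq (v a : ι → ℝ) :
    (v ⬝ᵥ v) * (a ⬝ᵥ a) ≤ 2 * (v ⬝ᵥ v) * (a ⬝ᵥ a) - (a ⬝ᵥ v) ^ 2 := by
  nlinarith [sq_dotProduct_le a v]

end DotProduct

theorem abs_sign_le_one (x : ℝ) : |(SignType.sign x : ℝ)| ≤ 1 := by
  cases SignType.sign x <;> simp

theorem e2norm_eq_sqrt_dotProduct {n : ℕ} (v : Fin n → ℝ) : e2norm v = √(v ⬝ᵥ v) := by
  simp only [e2norm, dotProduct, sq]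

theorem frobNorm_nonneg {n m : ℕ} (M : Matrix (Fin n) (Fin m) ℝ) : 0 ≤ frobNorm M :=
  Real.sqrt_nonneg _

theorem frobNorm_sq {n m : ℕ} (M : Matrix (Fin n) (Fin m) ℝ) :
    frobNorm M ^ 2 = vec M ⬝ᵥ vec M := by
  rw [frobNorm, Real.sq_sqrt (by positivity), dotProduct, Fintype.sum_prod_type_right]
  simp only [vec, sq]

section Frobenius

attribute [local instance] Matrix.frobeniusNormedAddCommGroup Matrix.frobeniusNormedSpace

theorem frobNorm_eq_norm {n m : ℕ} (M : Matrix (Fin n) (Fin m) ℝ) : frobNorm M = ‖M‖ := by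
  simp only [frobNorm, frobenius_norm_def, Real.norm_eq_abs, Real.rpow_two, sq_abs,
    Real.sqrt_eq_rpow]

theorem frobNorm_smul {n m : ℕ} (c : ℝ) (M : Matrix (Fin n) (Fin m) ℝ) :
    frobNorm (c • M) = |c| * frobNorm M := by
  simp only [frobNorm_eq_norm, norm_smul, Real.norm_eq_abs]

theorem frobNorm_sum_smul_le {n m k : ℕ} (f w : Fin k → ℝ)
    (E : Fin k → Matrix (Fin n) (Fin m) ℝ) (hE : ∀ i, frobNorm (E i) ≤ w i) :
    frobNorm (∑ i, f i • E i) ≤ ∑ i, |f i| * w i := by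
  simp only [frobNorm_eq_norm] at hE ⊢
  refine (norm_sum_le _ _).trans (Finset.sum_le_sum fun i _ => ?_)
  rw [norm_smul, Real.norm_eq_abs]
  exact mul_le_mul_of_nonneg_left (hE i) (abs_nonneg _)

end Frobenius

theorem vec_dotProduct_vec_vecMulVec {R m n : Type*} [CommSemiring R] [Fintype m] [Fintype n]
    (A : Matrix m n R) (x : m → R) (y : n → R) :
    vec A ⬝ᵥ vec (vecMulVec x y) = x ⬝ᵥ A *ᵥ y := by
  simp only [dotProduct, Fintype.sum_prod_type_right, vec, mulVec, vecMulVec, of_apply,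
    Finset.mul_sum]
  exact Finset.sum_congr rfl fun i _ => Finset.sum_congr rfl fun j _ => by ring

theorem Matrix.IsSymm.dotProduct_mulVec_comm {R n : Type*} [CommSemiring R] [Fintype n]
    {A : Matrix n n R} (hA : A.IsSymm) (x y : n → R) : x ⬝ᵥ A *ᵥ y = y ⬝ᵥ A *ᵥ x := by
  rw [dotProduct_mulVec, ← mulVec_transpose, hA.eq, dotProduct_comm]

section SymmBackwardDir

variable {R ι : Type*} [CommRing R] [Fintype ι]

/-- `‖v‖²` times the optimal direction `(aᵀv/‖v‖²) v vᵀ − v aᵀ − a vᵀ` of the paper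
(there `a = r`); the scaling avoids a division. -/
def symmBackwardDir (v a : ι → R) : Matrix ι ι R :=
  (a ⬝ᵥ v) • vecMulVec v v - (v ⬝ᵥ v) • (vecMulVec v a + vecMulVec a v)

theorem isSymm_symmBackwardDir (v a : ι → R) : (symmBackwardDir v a).IsSymm := by
  simp only [IsSymm, symmBackwardDir, transpose_sub, transpose_smul, transpose_add,
    transpose_vecMulVec, add_comm]

theorem symmBackwardDir_mulVec (v a : ι → R) :
    symmBackwardDir v a *ᵥ v = -(v ⬝ᵥ v) ^ 2 • a := by
  simp only [symmBackwardDir, sub_mulVec, smul_mulVec, add_mulVec, vecMulVec_mulVec,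
    op_smul_eq_smul]
  rw [dotProduct_comm a v]
  module

theorem vec_dotProduct_vec_symmBackwardDir {A : Matrix ι ι R} (hA : A.IsSymm) (v a : ι → R) :
    vec A ⬝ᵥ vec (symmBackwardDir v a) =
      (a ⬝ᵥ v) * (v ⬝ᵥ A *ᵥ v) - 2 * (v ⬝ᵥ v) * (a ⬝ᵥ A *ᵥ v) := by
  simp only [symmBackwardDir, vec_sub, vec_smul, vec_add, dotProduct_sub, dotProduct_smul,
    dotProduct_add, vec_dotProduct_vec_vecMulVec, smul_eq_mul,
    hA.dotProduct_mulVec_comm v a]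
  ring

end SymmBackwardDir

theorem frobNorm_symmBackwardDir {n : ℕ} (v a : Fin n → ℝ) :
    frobNorm (symmBackwardDir v a) = (v ⬝ᵥ v) * √(2 * (v ⬝ᵥ v) * (a ⬝ᵥ a) - (a ⬝ᵥ v) ^ 2) := by
  have hsq : frobNorm (symmBackwardDir v a) ^ 2 =
      (v ⬝ᵥ v) ^ 2 * (2 * (v ⬝ᵥ v) * (a ⬝ᵥ a) - (a ⬝ᵥ v) ^ 2) := by
    rw [frobNorm_sq, vec_dotProduct_vec_symmBackwardDir (isSymm_symmBackwardDir v a),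
      symmBackwardDir_mulVec]
    simp only [dotProduct_smul, smul_eq_mul, dotProduct_comm v a]
    ring
  rw [← Real.sqrt_sq (frobNorm_nonneg _), hsq,
    Real.sqrt_mul (sq_nonneg _), Real.sqrt_sq (dotProduct_self_nonneg v)]

theorem sqrt_le_frobNorm_mul_of_mulVec_eq {n : ℕ} {Δ : Matrix (Fin n) (Fin n) ℝ} (hΔ : Δ.IsSymm)
    {v a : Fin n → ℝ} (hΔv : Δ *ᵥ v = a) :
    √(2 * (v ⬝ᵥ v) * (a ⬝ᵥ a) - (a ⬝ᵥ v) ^ 2) ≤ frobNorm Δ * (v ⬝ᵥ v) := by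
  set s := 2 * (v ⬝ᵥ v) * (a ⬝ᵥ a) - (a ⬝ᵥ v) ^ 2
  have hpair : vec Δ ⬝ᵥ vec (symmBackwardDir v a) = -s := by
    rw [vec_dotProduct_vec_symmBackwardDir hΔ, hΔv, dotProduct_comm v a]
    ring
  have hs : 0 ≤ s := (mul_nonneg (dotProduct_self_nonneg v) (dotProduct_self_nonneg a)).trans
    (dotProduct_self_mul_le_two_mul_sub_sq v a)
  have hcs := sq_dotProduct_le (vec Δ) (vec (symmBackwardDir v a))
  rw [hpair, ← frobNorm_sq, ← frobNorm_sq, frobNorm_symmBackwardDir, mul_pow,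
    Real.sq_sqrt hs] at hcs
  rw [Real.sqrt_le_left (mul_nonneg (frobNorm_nonneg Δ) (dotProduct_self_nonneg v))]
  nlinarith

theorem sqrt_two_sub_mul_e2norm_mul_e2norm {n : ℕ} {v r : Fin n → ℝ} (hv : v ≠ 0)
    (hr : r ≠ 0) :
    √(2 - (r ⬝ᵥ v) ^ 2 / (e2norm r ^ 2 * e2norm v ^ 2)) * e2norm r * e2norm v =
      √(2 * (v ⬝ᵥ v) * (r ⬝ᵥ r) - (r ⬝ᵥ v) ^ 2) := by
  have hv' := dotProduct_self_pos hv
  have hr' := dotProduct_self_pos hr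
  rw [e2norm_eq_sqrt_dotProduct, e2norm_eq_sqrt_dotProduct, Real.sq_sqrt hr'.le,
    Real.sq_sqrt hv'.le, ← Real.sqrt_mul' _ hr'.le, ← Real.sqrt_mul' _ hv'.le]
  congr 1
  field_simp

/-- The set `T_sym^F` of the paper. -/
def symmBackwardErrors {n m : ℕ} (M : Matrix (Fin n) (Fin n) ℝ) (v : Fin n → ℝ) (lam : ℝ)
    (f w : Fin m → ℝ) : Set ℝ :=
  {t : ℝ | ∃ ε : ℝ, ∃ E : Fin m → Matrix (Fin n) (Fin n) ℝ,
    (∀ i, (E i)ᵀ = E i) ∧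
    (∀ i, frobNorm (E i) ≤ w i) ∧
    (M + ε • ∑ i, f i • E i).mulVec v = lam • v ∧ t = |ε|}

section SymmBackwardErrors

variable {n m : ℕ} {M : Matrix (Fin n) (Fin n) ℝ} {v : Fin n → ℝ} {lam : ℝ} {f w : Fin m → ℝ}
  {r : Fin n → ℝ}

theorem sqrt_div_le_of_mem_symmBackwardErrors (hv : v ≠ 0) (hpos : 0 < ∑ i, |f i| * w i)
    (hr : r = M *ᵥ v - lam • v) {t : ℝ} (ht : t ∈ symmBackwardErrors M v lam f w) :
    √(2 * (v ⬝ᵥ v) * (r ⬝ᵥ r) - (r ⬝ᵥ v) ^ 2) / ((∑ i, |f i| * w i) * (v ⬝ᵥ v)) ≤ t := by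
  obtain ⟨ε, E, hsymm, hnorm, heq, rfl⟩ := ht
  set Δ := ε • ∑ i, f i • E i
  have hΔ : Δ.IsSymm := by
    simp only [IsSymm, Δ, transpose_smul, transpose_sum, hsymm]
  have hΔv : Δ *ᵥ v = -r := by
    rw [add_mulVec] at heq
    rw [hr, ← heq]
    abel
  have hΔnorm : frobNorm Δ ≤ |ε| * ∑ i, |f i| * w i := by
    rw [frobNorm_smul]
    exact mul_le_mul_of_nonneg_left (frobNorm_sum_smul_le f w E hnorm) (abs_nonneg ε)
  have hlow := sqrt_le_frobNorm_mul_of_mulVec_eq hΔ hΔv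
  simp only [neg_dotProduct, dotProduct_neg, neg_neg, neg_sq] at hlow
  rw [div_le_iff₀ (mul_pos hpos (dotProduct_self_pos hv)), ← mul_assoc]
  exact hlow.trans (mul_le_mul_of_nonneg_right hΔnorm (dotProduct_self_nonneg v))

theorem sqrt_div_mem_symmBackwardErrors (hv : v ≠ 0) (hw : ∀ i, 0 ≤ w i)
    (hpos : 0 < ∑ i, |f i| * w i) (hr : r = M *ᵥ v - lam • v) (hrne : r ≠ 0) :
    √(2 * (v ⬝ᵥ v) * (r ⬝ᵥ r) - (r ⬝ᵥ v) ^ 2) / ((∑ i, |f i| * w i) * (v ⬝ᵥ v)) ∈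
      symmBackwardErrors M v lam f w := by
  set S := ∑ i, |f i| * w i
  set D := √(2 * (v ⬝ᵥ v) * (r ⬝ᵥ r) - (r ⬝ᵥ v) ^ 2) with hD_def
  have hv' := dotProduct_self_pos hv
  have hD : 0 < D := Real.sqrt_pos.mpr <|
    (mul_pos hv' (dotProduct_self_pos hrne)).trans_le (dotProduct_self_mul_le_two_mul_sub_sq v r)
  refine ⟨D / (S * (v ⬝ᵥ v)),
    fun i => ((SignType.sign (f i) : ℝ) * w i / ((v ⬝ᵥ v) * D)) • symmBackwardDir v r,
    fun i => (isSymm_symmBackwardDir v r).smul _, fun i => ?_, ?_,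
    (abs_of_pos (by positivity)).symm⟩
  · rw [frobNorm_smul, frobNorm_symmBackwardDir, ← hD_def, abs_div, abs_mul,
      abs_of_nonneg (hw i), abs_of_pos (mul_pos hv' hD), div_mul_cancel₀ _ (mul_pos hv' hD).ne']
    exact mul_le_of_le_one_left (hw i) (abs_sign_le_one (f i))
  · have hsum : ∑ i, f i • ((SignType.sign (f i) : ℝ) * w i / ((v ⬝ᵥ v) * D)) •
        symmBackwardDir v r = (S / ((v ⬝ᵥ v) * D)) • symmBackwardDir v r := by
      simp only [smul_smul, ← mul_div_assoc, ← mul_assoc, self_mul_sign, ← Finset.sum_smul,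
        ← Finset.sum_div, S]
    rw [hsum, add_mulVec, smul_mulVec, smul_mulVec, symmBackwardDir_mulVec, smul_smul, smul_smul,
      hr]
    have hcoef : D / (S * (v ⬝ᵥ v)) * (S / ((v ⬝ᵥ v) * D)) * -(v ⬝ᵥ v) ^ 2 = -1 := by
      field_simp
    rw [hcoef]
    module

end SymmBackwardErrors

theorem symmetric_backward_error_frobenius_general
    {n m : ℕ}
    (M : Matrix (Fin n) (Fin n) ℝ)
    (v : Fin n → ℝ) (hv : v ≠ 0) (lam : ℝ)
    (f w : Fin m → ℝ) (hw : ∀ i, 0 ≤ w i)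
    (hpos : 0 < ∑ i, |f i| * w i)
    (r : Fin n → ℝ) (hr : r = M.mulVec v - lam • v) (hrne : r ≠ 0) :
    IsLeast
      {t : ℝ | ∃ ε : ℝ, ∃ E : Fin m → Matrix (Fin n) (Fin n) ℝ,
        (∀ i, (E i)ᵀ = E i) ∧
        (∀ i, frobNorm (E i) ≤ w i) ∧
        (M + ε • ∑ i, f i • E i).mulVec v = lam • v ∧ t = |ε|}
      (Real.sqrt (2 - (r ⬝ᵥ v) ^ 2 / (e2norm r ^ 2 * e2norm v ^ 2)) *
        e2norm r / ((∑ i, |f i| * w i) * e2norm v)) := by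
  have hval : √(2 - (r ⬝ᵥ v) ^ 2 / (e2norm r ^ 2 * e2norm v ^ 2)) * e2norm r /
      ((∑ i, |f i| * w i) * e2norm v) =
      √(2 * (v ⬝ᵥ v) * (r ⬝ᵥ r) - (r ⬝ᵥ v) ^ 2) / ((∑ i, |f i| * w i) * (v ⬝ᵥ v)) := by
    rw [← sqrt_two_sub_mul_e2norm_mul_e2norm hv hrne, ← Real.sq_sqrt (dotProduct_self_nonneg v),
      ← e2norm_eq_sqrt_dotProduct]
    have hv_norm : 0 < e2norm v :=
      e2norm_eq_sqrt_dotProduct v ▸ Real.sqrt_pos.mpr (dotProduct_self_pos hv)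
    field_simp
  rw [hval]
  exact ⟨sqrt_div_mem_symmBackwardErrors hv hw hpos hr hrne,
    fun t ht => sqrt_div_le_of_mem_symmBackwardErrors hv hpos hr ht⟩

/-- for symmetric perturbations measured in the Frobenius norm,
the backward error equals `γ ‖r‖ / ((Σᵢ |fᵢ| wᵢ) ‖ṽ‖)` where
`γ = sqrt(2 − (rᵀṽ)²/(‖r‖²‖ṽ‖²))`. -/
theorem symmetric_backward_error_frobenius
    {n m : ℕ} (hn : 1 ≤ n) (hm : 1 ≤ m)
    (M : Matrix (Fin n) (Fin n) ℝ)
    (v : Fin n → ℝ) (hv : v ≠ 0) (lam : ℝ)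
    (f w : Fin m → ℝ) (hw : ∀ i, 0 ≤ w i)
    (hpos : 0 < ∑ i, |f i| * w i)
    (r : Fin n → ℝ) (hr : r = M.mulVec v - lam • v) (hrne : r ≠ 0) :
    IsLeast
      {t : ℝ | ∃ ε : ℝ, ∃ E : Fin m → Matrix (Fin n) (Fin n) ℝ,
        (∀ i, (E i)ᵀ = E i) ∧
        (∀ i, frobNorm (E i) ≤ w i) ∧
        (M + ε • ∑ i, f i • E i).mulVec v = lam • v ∧ t = |ε|}
      (Real.sqrt (2 - (r ⬝ᵥ v) ^ 2 / (e2norm r ^ 2 * e2norm v ^ 2)) *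
        e2norm r / ((∑ i, |f i| * w i) * e2norm v)) :=
  symmetric_backward_error_frobenius_general M v hv lam f w hw hpos r hr hrne
end
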